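/- Let x, F, g ∈ ℝ^d with ‖x‖² ≥ D > 0, suppose ⟨x, g⟩ ≥ cos β · ‖x‖·‖g‖ and ‖F − g‖ ≤ sin α · ‖g‖ with α, β ≥ 0 and α + β < π/2, and g ≠ 0. Then ⟨x, F⟩ ≥ ‖x‖·‖F‖·cos(α + β) > 0. -/

import Mathlib

/-!
Measured by unoriented angles, the hypotheses say `∠(x, g) ≤ β` and `∠(g, F) ≤ α`: the second
because a vector within distance `sin α · ‖g‖` of `g` makes an angle at most `α` with `g`.
The triangle inequality for angles gives `∠(x, F) ≤ α + β < π / 2`, and cosine is decreasing on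
`[0, π]`.
-/

open Real InnerProductGeometry

theorem ne_zero_of_norm_sub_le_sin_mul {E : Type*} [NormedAddCommGroup E] {F g : E} {α : ℝ}
    (hg : g ≠ 0) (hα : sin α < 1) (h : ‖F - g‖ ≤ sin α * ‖g‖) : F ≠ 0 := by
  rintro rfl
  rw [zero_sub, norm_neg] at h
  nlinarith [norm_pos_iff.mpr hg]

section

variable {V : Type*} [NormedAddCommGroup V] [InnerProductSpace ℝ V]

theorem angle_le_iff_cos_mul_le_inner {x y : V} (hx : x ≠ 0) (hy : y ≠ 0) {β : ℝ}
    (hβ₀ : 0 ≤ β) (hβπ : β ≤ π) :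
    angle x y ≤ β ↔ cos β * (‖x‖ * ‖y‖) ≤ inner ℝ x y := by
  rw [← cos_angle_mul_norm_mul_norm, mul_le_mul_iff_left₀ (by positivity)]
  exact (strictAntiOn_cos.le_iff_ge ⟨hβ₀, hβπ⟩ ⟨angle_nonneg x y, angle_le_pi x y⟩).symm

theorem cos_mul_le_inner_of_angle_le {x y : V} {γ : ℝ} (hγ : γ ≤ π) (h : angle x y ≤ γ) :
    cos γ * (‖x‖ * ‖y‖) ≤ inner ℝ x y := by
  rw [← cos_angle_mul_norm_mul_norm]
  gcongr
  exact cos_le_cos_of_nonneg_of_le_pi (angle_nonneg x y) hγ h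

/-- Expanding `‖F - g‖² ≤ sin² α ‖g‖²` gives `2⟪F, g⟫ ≥ ‖F‖² + cos² α ‖g‖²`; conclude by AM-GM. -/
theorem cos_mul_le_inner_of_norm_sub_le_sin_mul {F g : V} {α : ℝ}
    (h : ‖F - g‖ ≤ sin α * ‖g‖) : cos α * (‖F‖ * ‖g‖) ≤ inner ℝ F g := by
  have hsq : ‖F - g‖ ^ 2 ≤ (sin α * ‖g‖) ^ 2 := pow_le_pow_left₀ (norm_nonneg _) h 2
  rw [norm_sub_sq_real] at hsq
  nlinarith [sq_nonneg (‖F‖ - cos α * ‖g‖), sin_sq_add_cos_sq α]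

end

theorem stmt_9 (d : ℕ) (x F g : EuclideanSpace ℝ (Fin d)) (D α β : ℝ)
    (hD : 0 < D) (hx : D ≤ ‖x‖ ^ 2) (hg : g ≠ 0)
    (hα : 0 ≤ α) (hβ : 0 ≤ β) (hαβ : α + β < π / 2)
    (hxg : (inner ℝ x g : ℝ) ≥ Real.cos β * ‖x‖ * ‖g‖)
    (hFg : ‖F - g‖ ≤ Real.sin α * ‖g‖) :
    (inner ℝ x F : ℝ) ≥ ‖x‖ * ‖F‖ * Real.cos (α + β) ∧
      0 < ‖x‖ * ‖F‖ * Real.cos (α + β) := by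
  have hx0 : x ≠ 0 := by
    rintro rfl
    simp only [norm_zero, ne_eq, OfNat.ofNat_ne_zero, not_false_eq_true, zero_pow] at hx
    linarith
  have hsinα : sin α < 1 := by
    simpa using sin_lt_sin_of_lt_of_le_pi_div_two (by linarith [pi_pos]) le_rfl (by linarith)
  have hF0 : F ≠ 0 := ne_zero_of_norm_sub_le_sin_mul hg hsinα hFg
  have hangle_xg : angle x g ≤ β :=
    (angle_le_iff_cos_mul_le_inner hx0 hg hβ (by linarith [pi_pos])).mpr (by linarith)
  have hangle_gF : angle g F ≤ α := by
    rw [angle_comm, angle_le_iff_cos_mul_le_inner hF0 hg hα (by linarith [pi_pos])]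
    exact cos_mul_le_inner_of_norm_sub_le_sin_mul hFg
  have hangle_xF : angle x F ≤ α + β := by
    linarith [angle_le_angle_add_angle x g F]
  have hcos : 0 < cos (α + β) := cos_pos_of_mem_Ioo ⟨by linarith [pi_pos], hαβ⟩
  constructor
  · linarith [cos_mul_le_inner_of_angle_le (by linarith [pi_pos]) hangle_xF]
  · have := norm_pos_iff.mpr hx0
    have := norm_pos_iff.mpr hF0
    positivity
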